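/- arXiv:1512.02318 — 3 statements merged into one kernel-verified Lean document; each statement's English description precedes it below -/
import Mathlib

section
/- Suppose g(μ) = (1/2)‖Aμ − y‖² with A injective and h convex differentiable, so that F_β = g + β·h is strictly convex and the minimizer μ(β) over a closed convex set S is unique for every β ≥ 0. Then the map β ↦ μ(β) is continuous on [0, ∞). -/
/-!
Comparing the minimality of `μ β` for `g + β h` with that of `μ β'` for `g + β' h`, strong
convexity of `g` (with some modulus `κ > 0`, since the injective `A` is bounded below) gives
`κ/2 ‖μ β - μ β'‖² ≤ (β - β') (h (μ β') - h (μ β))`. The same comparison without the quadratic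
term shows that `β ↦ h (μ β)` is antitone, so on `[0, b]` the last factor is bounded by
`h (μ 0) - h (μ b)`, and `μ` is `1/2`-Hölder on every `[0, b]`.
-/

open Set Filter Topology

section Antitone

variable {E : Type*} {S : Set E} {f h : E → ℝ} {x : ℝ → E}

lemma antitoneOn_comp_of_isMinOn_add_smul {I : Set ℝ}
    (hx : ∀ β ∈ I, IsMinOn (f + β • h) S (x β)) (hxS : ∀ β ∈ I, x β ∈ S) :
    AntitoneOn (h ∘ x) I := by
  intro β₁ hβ₁ β₂ hβ₂ hle
  have h₁ := isMinOn_iff.mp (hx β₁ hβ₁) _ (hxS β₂ hβ₂)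
  have h₂ := isMinOn_iff.mp (hx β₂ hβ₂) _ (hxS β₁ hβ₁)
  simp only [Pi.add_apply, Pi.smul_apply, smul_eq_mul] at h₁ h₂
  rcases hle.eq_or_lt with rfl | hlt
  · rfl
  · by_contra! hgt
    simp only [Function.comp_apply] at hgt
    nlinarith

end Antitone

section MinimizerPath

variable {E : Type*} [NormedAddCommGroup E] [NormedSpace ℝ E] {S : Set E} {f h : E → ℝ}
  {m β β₁ β₂ : ℝ} {x₀ x₁ x₂ z : E} {x : ℝ → E}

lemma StrongConvexOn.add_smul_convexOn (hf : StrongConvexOn S m f) (hh : ConvexOn ℝ S h)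
    (hβ : 0 ≤ β) : StrongConvexOn S m (f + β • h) := by
  have := hf.add (hh.smul hβ).uniformConvexOn_zero
  rwa [add_zero] at this

lemma StrongConvexOn.mul_sq_norm_sub_le_sub_of_isMinOn (hf : StrongConvexOn S m f)
    (hx₀ : IsMinOn f S x₀) (hx₀S : x₀ ∈ S) (hz : z ∈ S) :
    m / 4 * ‖z - x₀‖ ^ 2 ≤ f z - f x₀ := by
  have hhalf : (0 : ℝ) ≤ 1 / 2 := by norm_num
  have hsum : (1 / 2 : ℝ) + 1 / 2 = 1 := by norm_num
  have hmid := hf.2 hz hx₀S hhalf hhalf hsum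
  have hmin := isMinOn_iff.mp hx₀ _ (hf.1 hz hx₀S hhalf hhalf hsum)
  simp only [smul_eq_mul] at hmid
  linarith

lemma mul_sq_norm_sub_le_of_isMinOn_add_smul (hf : StrongConvexOn S m f)
    (hh : ConvexOn ℝ S h) (hβ₁ : 0 ≤ β₁) (hβ₂ : 0 ≤ β₂)
    (hx₁ : IsMinOn (f + β₁ • h) S x₁) (hx₂ : IsMinOn (f + β₂ • h) S x₂)
    (hx₁S : x₁ ∈ S) (hx₂S : x₂ ∈ S) :
    m / 2 * ‖x₁ - x₂‖ ^ 2 ≤ (β₁ - β₂) * (h x₂ - h x₁) := by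
  have h₁ := (hf.add_smul_convexOn hh hβ₁).mul_sq_norm_sub_le_sub_of_isMinOn hx₁ hx₁S hx₂S
  have h₂ := (hf.add_smul_convexOn hh hβ₂).mul_sq_norm_sub_le_sub_of_isMinOn hx₂ hx₂S hx₁S
  rw [norm_sub_rev] at h₁
  simp only [Pi.add_apply, Pi.smul_apply, smul_eq_mul] at h₁ h₂
  linarith

theorem continuousOn_Ici_of_isMinOn_add_smul (hm : 0 < m) (hf : StrongConvexOn S m f)
    (hh : ConvexOn ℝ S h) (hxS : ∀ β ≥ 0, x β ∈ S)
    (hx : ∀ β ≥ 0, IsMinOn (f + β • h) S (x β)) :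
    ContinuousOn x (Ici 0) := by
  intro β₀ hβ₀
  have hβ₀ : (0 : ℝ) ≤ β₀ := hβ₀
  set C := h (x 0) - h (x (β₀ + 1))
  have hanti : AntitoneOn (h ∘ x) (Ici 0) := antitoneOn_comp_of_isMinOn_add_smul hx hxS
  have hbound : ∀ β ∈ Icc 0 (β₀ + 1), ‖x β - x β₀‖ ≤ √(2 * C / m * |β - β₀|) := by
    intro β hβ
    have hrange : ∀ γ ∈ Icc 0 (β₀ + 1), h (x (β₀ + 1)) ≤ h (x γ) ∧ h (x γ) ≤ h (x 0) :=
      fun γ hγ => ⟨hanti hγ.1 (mem_Ici.2 (by linarith)) hγ.2, hanti self_mem_Ici hγ.1 hγ.1⟩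
    have hdiff : |h (x β₀) - h (x β)| ≤ C := by
      have := hrange β hβ
      have := hrange β₀ ⟨hβ₀, by linarith⟩
      exact abs_sub_le_iff.2 ⟨by linarith, by linarith⟩
    have hsq : m / 2 * ‖x β - x β₀‖ ^ 2 ≤ |β - β₀| * C :=
      calc m / 2 * ‖x β - x β₀‖ ^ 2 ≤ (β - β₀) * (h (x β₀) - h (x β)) :=
            mul_sq_norm_sub_le_of_isMinOn_add_smul hf hh hβ.1 hβ₀ (hx β hβ.1) (hx β₀ hβ₀)
              (hxS β hβ.1) (hxS β₀ hβ₀)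
        _ ≤ |β - β₀| * |h (x β₀) - h (x β)| := (le_abs_self _).trans (abs_mul _ _).le
        _ ≤ |β - β₀| * C := by gcongr
    rw [← abs_norm]
    refine Real.abs_le_sqrt ?_
    rw [div_mul_eq_mul_div, le_div_iff₀ hm]
    linarith
  have hnear : ∀ᶠ β in 𝓝[Ici 0] β₀, β ∈ Icc 0 (β₀ + 1) :=
    inter_mem_nhdsWithin (Ici 0) (Iic_mem_nhds (by linarith))
  have hlim : Tendsto (fun β => √(2 * C / m * |β - β₀|)) (𝓝 β₀) (𝓝 0) := by
    have : Continuous fun β => √(2 * C / m * |β - β₀|) := by fun_prop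
    simpa using this.tendsto β₀
  exact tendsto_iff_norm_sub_tendsto_zero.2 <| squeeze_zero' (.of_forall fun _ => norm_nonneg _)
    (hnear.mono hbound) (hlim.mono_left nhdsWithin_le_nhds)

end MinimizerPath

section LeastSquares

variable {E F : Type*} [NormedAddCommGroup E] [NormedSpace ℝ E]
  [NormedAddCommGroup F] [InnerProductSpace ℝ F]

lemma strongConvexOn_univ_sq_norm_sub_div_two (y : F) :
    StrongConvexOn univ 1 fun u : F => ‖u - y‖ ^ 2 / 2 := by
  rw [strongConvexOn_iff_convex]
  have haffine : (fun u : F => ‖u - y‖ ^ 2 / 2 - 1 / 2 * ‖u‖ ^ 2) =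
      fun u => ‖y‖ ^ 2 / 2 - innerₛₗ ℝ y u := by
    funext u
    rw [norm_sub_sq_real, real_inner_comm]
    simp only [coe_innerₛₗ_apply]
    ring
  rw [haffine]
  exact (convexOn_const _ convex_univ).sub ((innerₛₗ ℝ y).concaveOn convex_univ)

lemma StrongConvexOn.comp_linearMap {f : F → ℝ} {m c : ℝ} {s : Set E}
    (hf : StrongConvexOn univ m f) (hm : 0 ≤ m) (T : E →ₗ[ℝ] F) (hc : 0 ≤ c)
    (hT : ∀ x, c * ‖x‖ ≤ ‖T x‖) (hs : Convex ℝ s) :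
    StrongConvexOn s (m * c ^ 2) (f ∘ T) := by
  refine ⟨hs, fun x _ z _ a b ha hb hab => ?_⟩
  have hTxz : c * ‖x - z‖ ≤ ‖T x - T z‖ := by simpa using hT (x - z)
  calc f (T (a • x + b • z)) = f (a • T x + b • T z) := by rw [map_add, map_smul, map_smul]
    _ ≤ a • f (T x) + b • f (T z) - a * b * (m / 2 * ‖T x - T z‖ ^ 2) :=
      hf.2 (mem_univ _) (mem_univ _) ha hb hab
    _ ≤ a • f (T x) + b • f (T z) - a * b * (m / 2 * (c * ‖x - z‖) ^ 2) := by gcongr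
    _ = _ := by simp only [Function.comp_apply]; ring

end LeastSquares

theorem stmt6_general {m n : ℕ} (A : Matrix (Fin m) (Fin n) ℝ) (y : Fin m → ℝ)
    (hA : Function.Injective A.mulVec)
    (h : (Fin n → ℝ) → ℝ) (hconv : ConvexOn ℝ Set.univ h)
    (S : Set (Fin n → ℝ)) (hSconv : Convex ℝ S)
    (μ : ℝ → (Fin n → ℝ))
    (hmem : ∀ β ≥ (0:ℝ), μ β ∈ S)
    (hmin : ∀ β ≥ (0:ℝ), ∀ x ∈ S,
      (1/2) * ∑ i, (A.mulVec (μ β) i - y i)^2 + β * h (μ β) ≤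
        (1/2) * ∑ i, (A.mulVec x i - y i)^2 + β * h x) :
    ContinuousOn μ (Set.Ici 0) := by
  let T : (Fin n → ℝ) →ₗ[ℝ] EuclideanSpace ℝ (Fin m) :=
    (WithLp.linearEquiv 2 ℝ (Fin m → ℝ)).symm.toLinearMap ∘ₗ A.mulVecLin
  obtain ⟨K, -, hK⟩ := T.injective_iff_antilipschitz.mp
    ((WithLp.linearEquiv 2 ℝ _).symm.injective.comp hA)
  obtain ⟨c, hc, hcT⟩ := antilipschitzWith_iff_exists_mul_le_norm.mp ⟨K, hK⟩
  let g := (fun u => ‖u - WithLp.toLp 2 y‖ ^ 2 / 2) ∘ T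
  have hg : ∀ x, g x = (1/2) * ∑ i, (A.mulVec x i - y i)^2 := by
    intro x
    change ‖WithLp.toLp 2 (A.mulVec x - y)‖ ^ 2 / 2 = _
    rw [EuclideanSpace.real_norm_sq_eq]
    simp only [Pi.sub_apply]
    ring
  refine continuousOn_Ici_of_isMinOn_add_smul (f := g) (h := h)
    (by positivity : (0 : ℝ) < 1 * c ^ 2) ((strongConvexOn_univ_sq_norm_sub_div_two _).comp_linearMap zero_le_one T hc.le hcT hSconv)
    (hconv.subset (subset_univ S) hSconv) hmem fun β hβ => isMinOn_iff.2 fun x hx => ?_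
  simpa [hg] using hmin β hβ x hx

/-- With g(μ) = (1/2)‖Aμ − y‖², A injective, and h convex continuous, the unique
minimizer μ(β) of g + β h over a nonempty closed convex set S depends continuously
on β on [0, ∞). -/
theorem stmt6 {m n : ℕ} (A : Matrix (Fin m) (Fin n) ℝ) (y : Fin m → ℝ)
    (hA : Function.Injective A.mulVec)
    (h : (Fin n → ℝ) → ℝ) (hconv : ConvexOn ℝ Set.univ h) (hcont : Continuous h)
    (S : Set (Fin n → ℝ)) (hSne : S.Nonempty) (hScl : IsClosed S) (hSconv : Convex ℝ S)
    (μ : ℝ → (Fin n → ℝ))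
    (hmem : ∀ β ≥ (0:ℝ), μ β ∈ S)
    (hmin : ∀ β ≥ (0:ℝ), ∀ x ∈ S,
      (1/2) * ∑ i, (A.mulVec (μ β) i - y i)^2 + β * h (μ β) ≤
        (1/2) * ∑ i, (A.mulVec x i - y i)^2 + β * h x)
    (huniq : ∀ β ≥ (0:ℝ), ∀ x ∈ S,
      ((1/2) * ∑ i, (A.mulVec x i - y i)^2 + β * h x =
        (1/2) * ∑ i, (A.mulVec (μ β) i - y i)^2 + β * h (μ β)) → x = μ β) :
    ContinuousOn μ (Set.Ici 0) :=
  stmt6_general A y hA h hconv S hSconv μ hmem hmin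
end

section
/- Let g(μ) = (1/2)‖Aμ − y‖² with A injective, h convex, and let μ(β) be the unique minimizer of g + β·h over a closed convex set S. Then for 0 ≤ β₁ < β₂, the strong convexity of g gives the path bound (σ_min(A)²/2)·‖μ(β₂) − μ(β₁)‖² ≤ (β₂ − β₁)·(h(μ(β₁)) − h(μ(β₂))). In particular the path has locally bounded variation and ‖μ(β₂) − μ(β₁)‖ → 0 as β₂ → β₁. -/
/-- Strong convexity of the data term (σ_min(A)² lower bound) gives the path bound
(σ²/2)‖μ(β₂) − μ(β₁)‖² ≤ (β₂ − β₁)(h(μ(β₁)) − h(μ(β₂))). -/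
theorem stmt7 {m n : ℕ} (A : Matrix (Fin m) (Fin n) ℝ) (y : Fin m → ℝ)
    (σ : ℝ) (hσ : 0 < σ)
    (hsv : ∀ x : Fin n → ℝ, σ^2 * ∑ j, x j ^ 2 ≤ ∑ i, (A.mulVec x i)^2)
    (h : (Fin n → ℝ) → ℝ) (hconv : ConvexOn ℝ Set.univ h)
    (S : Set (Fin n → ℝ)) (hSne : S.Nonempty) (hScl : IsClosed S) (hSconv : Convex ℝ S)
    (β₁ β₂ : ℝ) (hβ₁ : 0 ≤ β₁) (hββ : β₁ < β₂)
    (μ₁ μ₂ : Fin n → ℝ) (hμ₁S : μ₁ ∈ S) (hμ₂S : μ₂ ∈ S)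
    (hmin₁ : ∀ x ∈ S,
      (1/2) * ∑ i, (A.mulVec μ₁ i - y i)^2 + β₁ * h μ₁ ≤
        (1/2) * ∑ i, (A.mulVec x i - y i)^2 + β₁ * h x)
    (hmin₂ : ∀ x ∈ S,
      (1/2) * ∑ i, (A.mulVec μ₂ i - y i)^2 + β₂ * h μ₂ ≤
        (1/2) * ∑ i, (A.mulVec x i - y i)^2 + β₂ * h x) :
    σ^2 / 2 * ∑ j, (μ₂ j - μ₁ j)^2 ≤ (β₂ - β₁) * (h μ₁ - h μ₂) := by
  set w : Fin n → ℝ := fun j => (μ₁ j + μ₂ j)/2 with hwdef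
  have hsmul : (1/2 : ℝ) • μ₁ + (1/2 : ℝ) • μ₂ = w := by
    funext j; simp [hwdef]; ring
  have hwS : w ∈ S := by
    have := hSconv hμ₁S hμ₂S (by norm_num : (0:ℝ) ≤ 1/2) (by norm_num : (0:ℝ) ≤ 1/2)
      (by norm_num)
    rwa [hsmul] at this
  have hhm : h w ≤ (1/2) * h μ₁ + (1/2) * h μ₂ := by
    have := hconv.2 (Set.mem_univ μ₁) (Set.mem_univ μ₂)
      (by norm_num : (0:ℝ) ≤ 1/2) (by norm_num : (0:ℝ) ≤ 1/2) (by norm_num)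
    rwa [hsmul] at this
  have key : ∀ i, A.mulVec w i = (A.mulVec μ₁ i + A.mulVec μ₂ i)/2 := by
    intro i
    simp only [Matrix.mulVec, dotProduct, hwdef]
    rw [← Finset.sum_add_distrib, Finset.sum_div]
    apply Finset.sum_congr rfl
    intros; ring
  have key2 : ∀ i, A.mulVec (fun j => μ₂ j - μ₁ j) i = A.mulVec μ₂ i - A.mulVec μ₁ i := by
    intro i
    simp only [Matrix.mulVec, dotProduct]
    rw [← Finset.sum_sub_distrib]
    apply Finset.sum_congr rfl
    intros; ring
  -- parallelogram identity for the quadratic term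
  have hgid : ∑ i, (A.mulVec w i - y i)^2 =
      (∑ i, (A.mulVec μ₁ i - y i)^2)/2 + (∑ i, (A.mulVec μ₂ i - y i)^2)/2
        - (∑ i, (A.mulVec (fun j => μ₂ j - μ₁ j) i)^2)/4 := by
    rw [Finset.sum_div, Finset.sum_div, Finset.sum_div, ← Finset.sum_add_distrib,
      ← Finset.sum_sub_distrib]
    apply Finset.sum_congr rfl
    intro i _
    rw [key i, key2 i]; ring
  have h1 := hmin₁ w hwS
  have h2 := hmin₂ w hwS
  have hsv' := hsv (fun j => μ₂ j - μ₁ j)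
  nlinarith [hsv', h1, h2, hgid, hhm, mul_le_mul_of_nonneg_left hhm
    (by linarith : (0:ℝ) ≤ β₁ + β₂)]
end

section
/- Let F_β(μ) = (1/2)‖Aμ − y‖² + β·h(μ) with A injective and h convex differentiable with L_h-Lipschitz gradient, and let μ(β) denote the unique unconstrained minimizer. Then for β₁, β₂ ≥ 0, ‖μ(β₂) − μ(β₁)‖ ≤ |β₂ − β₁|·‖∇h(μ(β₁))‖ / σ_min(A)². That is, the unconstrained solution path is locally Lipschitz in the tuning parameter. -/
/-!
Writing `v = μ₂ - μ₁`, the first-order conditions `Aᵀ(Aμₖ - y) + βₖ ∇h(μₖ) = 0`, tested against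
`v` and subtracted, give
`‖Av‖² = (β₁ - β₂) ⟨∇h(μ₁), v⟩ - β₂ ⟨∇h(μ₂) - ∇h(μ₁), v⟩ ≤ (β₁ - β₂) ⟨∇h(μ₁), v⟩`,
since the gradient of a convex function is monotone. Bounding the left side below by
`σ² ‖v‖²` and the right side above by Cauchy–Schwarz yields the claim.
-/

open Matrix Finset Set

theorem ConvexOn.add_le_of_hasDerivAt_line {E : Type*} [AddCommGroup E] [Module ℝ E]
    {f : E → ℝ} (hf : ConvexOn ℝ univ f) {x v : E} {d : ℝ}
    (hd : HasDerivAt (fun s : ℝ => f (x + s • v)) d 0) :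
    f x + d ≤ f (x + v) := by
  have hline : ConvexOn ℝ univ (fun s : ℝ => f (x + s • v)) :=
    (hf.translate_right x).comp_linearMap (LinearMap.toSpanSingleton ℝ E v)
  have := hline.le_slope_of_hasDerivAt (mem_univ 0) (mem_univ 1) one_pos hd
  simp only [slope_def_field, one_smul, zero_smul, add_zero, sub_zero, div_one] at this
  linarith

section Gradient

variable {ι : Type*} [Fintype ι]

theorem ConvexOn.sub_dotProduct_sub_nonneg {f : (ι → ℝ) → ℝ} {G : (ι → ℝ) → ι → ℝ}
    (hf : ConvexOn ℝ univ f)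
    (hG : ∀ x v, HasDerivAt (fun s : ℝ => f (x + s • v)) (G x ⬝ᵥ v) 0) (x y : ι → ℝ) :
    0 ≤ (G y - G x) ⬝ᵥ (y - x) := by
  have hxy := hf.add_le_of_hasDerivAt_line (hG x (y - x))
  have hyx := hf.add_le_of_hasDerivAt_line (hG y (x - y))
  rw [add_sub_cancel] at hxy hyx
  rw [← neg_sub y x, dotProduct_neg] at hyx
  rw [sub_dotProduct]
  linarith

theorem abs_dotProduct_le_sqrt_mul_sqrt (u w : ι → ℝ) :
    |u ⬝ᵥ w| ≤ √(∑ j, u j ^ 2) * √(∑ j, w j ^ 2) := by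
  rw [abs_le, neg_le, ← neg_dotProduct]
  refine ⟨?_, Real.sum_mul_le_sqrt_mul_sqrt _ _ _⟩
  simpa only [dotProduct, Pi.neg_apply, neg_sq] using Real.sum_mul_le_sqrt_mul_sqrt univ (-u) w

end Gradient

theorem hasDerivAt_half_sum_sq_add_smul {κ : Type*} [Fintype κ] (r w : κ → ℝ) :
    HasDerivAt (fun s : ℝ => (1 / 2) * ∑ i, (r + s • w) i ^ 2) (r ⬝ᵥ w) 0 := by
  have hi : ∀ i, HasDerivAt (fun s : ℝ => (r i + s * w i) ^ 2) (2 * r i * w i) 0 := fun i => by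
    simpa using (((hasDerivAt_id (0 : ℝ)).mul_const (w i)).const_add (r i)).fun_pow 2
  have hsum := (HasDerivAt.fun_sum (u := univ) fun i _ => hi i).const_mul (1 / 2 : ℝ)
  have hval : (1 / 2) * ∑ i, 2 * r i * w i = r ⬝ᵥ w := by
    simp only [dotProduct, mul_sum]
    exact sum_congr rfl fun i _ => by ring
  simpa only [Pi.add_apply, Pi.smul_apply, smul_eq_mul, hval] using hsum

theorem eq_zero_of_hasDerivAt_line_of_forall_le {E : Type*} [AddCommGroup E] [Module ℝ E]
    {f : E → ℝ} {μ v : E} {d : ℝ} (hmin : ∀ x, f μ ≤ f x)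
    (hd : HasDerivAt (fun s : ℝ => f (μ + s • v)) d 0) : d = 0 :=
  IsLocalMin.hasDerivAt_eq_zero
    (Filter.Eventually.of_forall fun s => by simpa using hmin (μ + s • v)) hd

section PenalizedLeastSquares

variable {ι κ : Type*} [Fintype ι] [Fintype κ] (A : Matrix κ ι ℝ) (y : κ → ℝ)
  (h : (ι → ℝ) → ℝ)

noncomputable def penalizedLeastSquares (β : ℝ) (x : ι → ℝ) : ℝ :=
  (1 / 2) * ∑ i, ((A *ᵥ x) i - y i) ^ 2 + β * h x

variable {A y h} {G : (ι → ℝ) → ι → ℝ}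

theorem penalizedLeastSquares_optimality
    (hG : ∀ x v, HasDerivAt (fun s : ℝ => h (x + s • v)) (G x ⬝ᵥ v) 0) {β : ℝ} {μ : ι → ℝ}
    (hmin : ∀ x, penalizedLeastSquares A y h β μ ≤ penalizedLeastSquares A y h β x)
    (v : ι → ℝ) :
    (A *ᵥ μ - y) ⬝ᵥ (A *ᵥ v) + β * (G μ ⬝ᵥ v) = 0 := by
  refine eq_zero_of_hasDerivAt_line_of_forall_le (v := v) hmin ?_
  have hres : ∀ s : ℝ, A *ᵥ (μ + s • v) - y = (A *ᵥ μ - y) + s • (A *ᵥ v) := fun s => by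
    rw [mulVec_add, mulVec_smul]
    abel
  have hquad := hasDerivAt_half_sum_sq_add_smul (A *ᵥ μ - y) (A *ᵥ v)
  simp only [← hres] at hquad
  exact hquad.add ((hG μ v).const_mul β)

theorem penalizedLeastSquares_sum_sq_mulVec_sub_le (hh : ConvexOn ℝ univ h)
    (hG : ∀ x v, HasDerivAt (fun s : ℝ => h (x + s • v)) (G x ⬝ᵥ v) 0)
    {β₁ β₂ : ℝ} (hβ₂ : 0 ≤ β₂) {μ₁ μ₂ : ι → ℝ}
    (hmin₁ : ∀ x, penalizedLeastSquares A y h β₁ μ₁ ≤ penalizedLeastSquares A y h β₁ x)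
    (hmin₂ : ∀ x, penalizedLeastSquares A y h β₂ μ₂ ≤ penalizedLeastSquares A y h β₂ x) :
    ∑ i, (A *ᵥ (μ₂ - μ₁)) i ^ 2 ≤ (β₁ - β₂) * (G μ₁ ⬝ᵥ (μ₂ - μ₁)) := by
  have opt₁ := penalizedLeastSquares_optimality hG hmin₁ (μ₂ - μ₁)
  have opt₂ := penalizedLeastSquares_optimality hG hmin₂ (μ₂ - μ₁)
  have hmono := hh.sub_dotProduct_sub_nonneg hG μ₁ μ₂
  have hsq : ∑ i, (A *ᵥ (μ₂ - μ₁)) i ^ 2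
      = (A *ᵥ μ₂ - y) ⬝ᵥ (A *ᵥ (μ₂ - μ₁)) - (A *ᵥ μ₁ - y) ⬝ᵥ (A *ᵥ (μ₂ - μ₁)) := by
    rw [← sub_dotProduct, sub_sub_sub_cancel_right, ← mulVec_sub]
    simp only [dotProduct, sq]
  rw [sub_dotProduct] at hmono
  rw [hsq]
  nlinarith [mul_nonneg hβ₂ hmono]

end PenalizedLeastSquares

theorem stmt17_general {m n : ℕ} (A : Matrix (Fin m) (Fin n) ℝ) (y : Fin m → ℝ)
    (σ : ℝ) (hσ : 0 < σ)
    (hsv : ∀ x : Fin n → ℝ, σ^2 * ∑ j, x j ^ 2 ≤ ∑ i, (A.mulVec x i)^2)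
    (h : (Fin n → ℝ) → ℝ) (Dh : (Fin n → ℝ) → (Fin n → ℝ))
    (hconv : ConvexOn ℝ Set.univ h)
    (hdiff : ∀ x v : Fin n → ℝ,
      HasDerivAt (fun s : ℝ => h (x + s • v)) (∑ j, Dh x j * v j) 0)
    (β₁ β₂ : ℝ) (hβ₂ : 0 ≤ β₂)
    (μ₁ μ₂ : Fin n → ℝ)
    (hmin₁ : ∀ x : Fin n → ℝ,
      (1/2) * ∑ i, (A.mulVec μ₁ i - y i)^2 + β₁ * h μ₁ ≤
        (1/2) * ∑ i, (A.mulVec x i - y i)^2 + β₁ * h x)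
    (hmin₂ : ∀ x : Fin n → ℝ,
      (1/2) * ∑ i, (A.mulVec μ₂ i - y i)^2 + β₂ * h μ₂ ≤
        (1/2) * ∑ i, (A.mulVec x i - y i)^2 + β₂ * h x) :
    Real.sqrt (∑ j, (μ₂ j - μ₁ j)^2) ≤
      |β₂ - β₁| * Real.sqrt (∑ j, (Dh μ₁ j)^2) / σ^2 := by
  set N := √(∑ j, (μ₂ j - μ₁ j) ^ 2)
  set C := |β₂ - β₁| * √(∑ j, Dh μ₁ j ^ 2)
  have hcore := penalizedLeastSquares_sum_sq_mulVec_sub_le hconv hdiff hβ₂ hmin₁ hmin₂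
  have hcs : (β₁ - β₂) * (Dh μ₁ ⬝ᵥ (μ₂ - μ₁)) ≤ C * N := by
    calc (β₁ - β₂) * (Dh μ₁ ⬝ᵥ (μ₂ - μ₁)) ≤ |β₁ - β₂| * |Dh μ₁ ⬝ᵥ (μ₂ - μ₁)| := by
          rw [← abs_mul]; exact le_abs_self _
      _ ≤ C * N := by
          rw [abs_sub_comm, mul_assoc]
          exact mul_le_mul_of_nonneg_left (abs_dotProduct_le_sqrt_mul_sqrt _ _) (abs_nonneg _)
  have hN : N ^ 2 = ∑ j, (μ₂ j - μ₁ j) ^ 2 := Real.sq_sqrt (by positivity)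
  have hquad : σ ^ 2 * N ^ 2 ≤ C * N := by
    rw [hN]
    exact (hsv (μ₂ - μ₁)).trans (hcore.trans hcs)
  rw [le_div_iff₀ (by positivity)]
  rcases (show 0 ≤ N from Real.sqrt_nonneg _).eq_or_lt with hN0 | hNpos
  · rw [← hN0, zero_mul]; positivity
  · nlinarith

/-- Lipschitz continuity of the unconstrained solution path in the tuning parameter:
‖μ(β₂) − μ(β₁)‖ ≤ |β₂ − β₁| ‖∇h(μ(β₁))‖ / σ_min(A)². -/
theorem stmt17 {m n : ℕ} (A : Matrix (Fin m) (Fin n) ℝ) (y : Fin m → ℝ)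
    (hA : Function.Injective A.mulVec)
    (σ : ℝ) (hσ : 0 < σ)
    (hsv : ∀ x : Fin n → ℝ, σ^2 * ∑ j, x j ^ 2 ≤ ∑ i, (A.mulVec x i)^2)
    (h : (Fin n → ℝ) → ℝ) (Dh : (Fin n → ℝ) → (Fin n → ℝ))
    (hconv : ConvexOn ℝ Set.univ h)
    (hdiff : ∀ x v : Fin n → ℝ,
      HasDerivAt (fun s : ℝ => h (x + s • v)) (∑ j, Dh x j * v j) 0)
    (Lh : ℝ) (hLh : 0 < Lh)
    (hlip : ∀ x x' : Fin n → ℝ,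
      Real.sqrt (∑ j, (Dh x j - Dh x' j)^2) ≤ Lh * Real.sqrt (∑ j, (x j - x' j)^2))
    (β₁ β₂ : ℝ) (hβ₁ : 0 ≤ β₁) (hβ₂ : 0 ≤ β₂)
    (μ₁ μ₂ : Fin n → ℝ)
    (hmin₁ : ∀ x : Fin n → ℝ,
      (1/2) * ∑ i, (A.mulVec μ₁ i - y i)^2 + β₁ * h μ₁ ≤
        (1/2) * ∑ i, (A.mulVec x i - y i)^2 + β₁ * h x)
    (hmin₂ : ∀ x : Fin n → ℝ,
      (1/2) * ∑ i, (A.mulVec μ₂ i - y i)^2 + β₂ * h μ₂ ≤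
        (1/2) * ∑ i, (A.mulVec x i - y i)^2 + β₂ * h x) :
    Real.sqrt (∑ j, (μ₂ j - μ₁ j)^2) ≤
      |β₂ - β₁| * Real.sqrt (∑ j, (Dh μ₁ j)^2) / σ^2 :=
  stmt17_general A y σ hσ hsv h Dh hconv hdiff β₁ β₂ hβ₂ μ₁ μ₂ hmin₁ hmin₂
end
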